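/- arXiv:1605.04388 — 3 statements merged into one kernel-verified Lean document; each statement's English description precedes it below -/
import Mathlib

section
/- Let H ∈ (1/2, 1), set α_H = H(2H−1) and φ(y) = α_H |y|^{2H−2} for y ≠ 0. Let (λ_i)_{i∈ℕ} be a sequence of positive real numbers and let (a_i)_{i∈ℕ} be a square-summable sequence of real numbers. Then there exists a constant C > 0, depending only on H, such that for every δ ∈ [0, H] and all 0 ≤ s < t, one has ∫_s^t ∫_s^t ( Σ_{i∈ℕ} λ_i^{2δ} e^{−λ_i(2t−u−v)} a_i² ) φ(u−v) du dv ≤ C (t−s)^{2(H−δ)} Σ_{i∈ℕ} a_i². -/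
/-!
Expanding the series and using Tonelli, it suffices to bound, for each eigenvalue `λ`,
`λ^{2δ} J(λ)` with `J(λ) = ∫∫ e^{-λ(2t-u-v)} |u-v|^{2H-2} du dv`. Bounding the exponential
by `1` gives `J(λ) ≲ (t-s)^{2H}`; bounding it by `e^{-λ(t-u)/2} e^{-λ|u-v|/2}` and comparing
with a Gamma integral gives `J(λ) ≲ λ^{-2H}`. The first bound when `λ(t-s) ≤ 1` and the
second otherwise give `λ^{2δ} J(λ) ≲ (t-s)^{2(H-δ)}` uniformly in `λ`, for `0 ≤ δ ≤ H`.

All estimates are made for lower Lebesgue integrals, so no integrability has to be checked: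
a non-integrable Bochner integral is `0`, which is harmless for an upper bound.
-/

open MeasureTheory Set Real
open scoped ENNReal

lemma ofReal_integral_le_lintegral_ofReal {α : Type*} [MeasurableSpace α] {μ : Measure α}
    {f : α → ℝ} (hf : 0 ≤ᵐ[μ] f) :
    ENNReal.ofReal (∫ x, f x ∂μ) ≤ ∫⁻ x, ENNReal.ofReal (f x) ∂μ := by
  by_cases hi : Integrable f μ
  · exact (ofReal_integral_eq_lintegral_ofReal hi hf).le
  · simp [integral_undef hi]

lemma ofReal_tsum_le_tsum_ofReal {ι : Type*} {f : ι → ℝ} (hf : ∀ i, 0 ≤ f i) :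
    ENNReal.ofReal (∑' i, f i) ≤ ∑' i, ENNReal.ofReal (f i) := by
  by_cases hs : Summable f
  · exact (ENNReal.ofReal_tsum_of_nonneg hf hs).le
  · simp [tsum_eq_zero_of_not_summable hs]

lemma ofReal_integral_integral_tsum_le {α β ι : Type*} [MeasurableSpace α] [MeasurableSpace β]
    [Countable ι] {μ : Measure α} {ν : Measure β} [SFinite ν] {f : ι → α → β → ℝ}
    (hf0 : ∀ i x y, 0 ≤ f i x y) (hf : ∀ i, Measurable (Function.uncurry (f i))) :
    ENNReal.ofReal (∫ x, ∫ y, ∑' i, f i x y ∂ν ∂μ)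
      ≤ ∑' i, ∫⁻ x, ∫⁻ y, ENNReal.ofReal (f i x y) ∂ν ∂μ := by
  have hsum0 : ∀ x y, 0 ≤ ∑' i, f i x y := fun x y => tsum_nonneg (hf0 · x y)
  calc ENNReal.ofReal (∫ x, ∫ y, ∑' i, f i x y ∂ν ∂μ)
      ≤ ∫⁻ x, ENNReal.ofReal (∫ y, ∑' i, f i x y ∂ν) ∂μ :=
        ofReal_integral_le_lintegral_ofReal (ae_of_all _ fun x => integral_nonneg (hsum0 x))
    _ ≤ ∫⁻ x, ∫⁻ y, ∑' i, ENNReal.ofReal (f i x y) ∂ν ∂μ :=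
      lintegral_mono fun x =>
        (ofReal_integral_le_lintegral_ofReal (ae_of_all _ (hsum0 x))).trans
          (lintegral_mono fun y => ofReal_tsum_le_tsum_ofReal (hf0 · x y))
    _ = ∑' i, ∫⁻ x, ∫⁻ y, ENNReal.ofReal (f i x y) ∂ν ∂μ := by
        have hsec : ∀ i x, Measurable fun y => ENNReal.ofReal (f i x y) :=
          fun i x => ((hf i).comp measurable_prodMk_left).ennreal_ofReal
        rw [lintegral_congr fun x => lintegral_tsum fun i => (hsec i x).aemeasurable]
        exact lintegral_tsum fun i => (hf i).ennreal_ofReal.lintegral_prod_right.aemeasurable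

lemma setLIntegral_Ioo_comp_const_sub (g : ℝ → ℝ≥0∞) (u s t : ℝ) :
    ∫⁻ v in Ioo s t, g (u - v) = ∫⁻ x in Ioo (u - t) (u - s), g x := by
  rw [← image_const_sub_Ioo]
  exact (Measure.measurePreserving_sub_left volume u).setLIntegral_comp_emb
    (MeasurableEquiv.subLeft u).measurableEmbedding g _

lemma setLIntegral_Ioo_comp_abs_le (g : ℝ → ℝ≥0∞) (r : ℝ) :
    ∫⁻ x in Ioo (-r) r, g |x| ≤ 2 * ∫⁻ x in Ioo 0 r, g x := by
  have hneg : ∫⁻ x in Ioo (-r) 0, g |x| = ∫⁻ x in Ioo 0 r, g x := by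
    rw [setLIntegral_congr_fun measurableSet_Ioo fun x hx => by rw [abs_of_neg hx.2, ← zero_sub],
      setLIntegral_Ioo_comp_const_sub, sub_zero, sub_neg_eq_add, zero_add]
  have hpos : ∫⁻ x in Ico 0 r, g |x| = ∫⁻ x in Ioo 0 r, g x := by
    rw [setLIntegral_congr Ioo_ae_eq_Ico.symm]
    exact setLIntegral_congr_fun measurableSet_Ioo fun x hx => by rw [abs_of_pos hx.1]
  calc ∫⁻ x in Ioo (-r) r, g |x| ≤ ∫⁻ x in Ioo (-r) 0 ∪ Ico 0 r, g |x| :=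
        lintegral_mono_set Ioo_subset_Ioo_union_Ico
    _ ≤ (∫⁻ x in Ioo (-r) 0, g |x|) + ∫⁻ x in Ico 0 r, g |x| := lintegral_union_le _ _ _
    _ = 2 * ∫⁻ x in Ioo 0 r, g x := by rw [hneg, hpos, two_mul]

lemma setLIntegral_Ioo_comp_abs_sub_le {s t u : ℝ} (hu : u ∈ Icc s t) (g : ℝ → ℝ≥0∞) :
    ∫⁻ v in Ioo s t, g |u - v| ≤ 2 * ∫⁻ x in Ioo 0 (t - s), g x :=
  calc ∫⁻ v in Ioo s t, g |u - v| = ∫⁻ x in Ioo (u - t) (u - s), g |x| :=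
        setLIntegral_Ioo_comp_const_sub (fun x => g |x|) u s t
    _ ≤ ∫⁻ x in Ioo (-(t - s)) (t - s), g |x| :=
        lintegral_mono_set (Ioo_subset_Ioo (by linarith [hu.1]) (by linarith [hu.2]))
    _ ≤ 2 * ∫⁻ x in Ioo 0 (t - s), g x := setLIntegral_Ioo_comp_abs_le g _

lemma lintegral_Ioo_ofReal_rpow {p r : ℝ} (hp : -1 < p) (hr : 0 ≤ r) :
    ∫⁻ x in Ioo 0 r, ENNReal.ofReal (x ^ p) = ENNReal.ofReal (r ^ (p + 1) / (p + 1)) := by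
  have hint : IntegrableOn (fun x : ℝ => x ^ p) (Ioo 0 r) := by
    have h := intervalIntegral.intervalIntegrable_rpow' (a := 0) (b := r) hp
    rw [intervalIntegrable_iff_integrableOn_Ioc_of_le hr] at h
    exact h.mono_set Ioo_subset_Ioc_self
  rw [← ofReal_integral_eq_lintegral_ofReal hint
    (ae_restrict_of_forall_mem measurableSet_Ioo fun x hx => rpow_nonneg hx.1.le p),
    ← integral_Ioc_eq_integral_Ioo, ← intervalIntegral.integral_of_le hr,
    integral_rpow (Or.inl hp), zero_rpow (by linarith), sub_zero]

lemma lintegral_Ioi_ofReal_rpow_mul_exp_neg_mul {p c : ℝ} (hp : -1 < p) (hc : 0 < c) :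
    ∫⁻ x in Ioi 0, ENNReal.ofReal (x ^ p * exp (-(c * x)))
      = ENNReal.ofReal ((1 / c) ^ (p + 1) * Gamma (p + 1)) := by
  have hint : IntegrableOn (fun x : ℝ => x ^ p * exp (-(c * x))) (Ioi 0) := by
    simpa only [rpow_one, neg_mul] using integrableOn_rpow_mul_exp_neg_mul_rpow hp zero_lt_one hc
  rw [← ofReal_integral_eq_lintegral_ofReal hint
    (ae_restrict_of_forall_mem measurableSet_Ioi fun x hx => by have : 0 < x := hx; positivity),
    ← integral_rpow_mul_exp_neg_mul_Ioi (by linarith) hc, add_sub_cancel_right]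

-- `J(λ)` of the header, for a general exponent `p` in place of `2H - 2`.
noncomputable def expKernelIntegral (p lam s t : ℝ) : ℝ≥0∞ :=
  ∫⁻ u in Ioo s t, ∫⁻ v in Ioo s t,
    ENNReal.ofReal (exp (-lam * (2 * t - u - v)) * |u - v| ^ p)

lemma expKernelIntegral_le_rpow {p lam s t : ℝ} (hp : -1 < p) (hlam : 0 ≤ lam) (hst : s < t) :
    expKernelIntegral p lam s t ≤ ENNReal.ofReal (2 / (p + 1) * (t - s) ^ (p + 2)) := by
  have hts : 0 < t - s := sub_pos.mpr hst
  set D := 2 * ((t - s) ^ (p + 1) / (p + 1)) with hD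
  have hD0 : 0 ≤ D := mul_nonneg zero_le_two (div_nonneg (by positivity) (by linarith))
  have inner : ∀ u ∈ Ioo s t, ∫⁻ v in Ioo s t,
      ENNReal.ofReal (exp (-lam * (2 * t - u - v)) * |u - v| ^ p) ≤ ENNReal.ofReal D := by
    intro u hu
    calc ∫⁻ v in Ioo s t, ENNReal.ofReal (exp (-lam * (2 * t - u - v)) * |u - v| ^ p)
        ≤ ∫⁻ v in Ioo s t, ENNReal.ofReal (|u - v| ^ p) := by
          refine setLIntegral_mono' measurableSet_Ioo fun v hv => ENNReal.ofReal_le_ofReal ?_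
          refine mul_le_of_le_one_left (by positivity) (exp_le_one_iff.mpr ?_)
          nlinarith [hu.2, hv.2]
      _ ≤ 2 * ∫⁻ x in Ioo 0 (t - s), ENNReal.ofReal (x ^ p) :=
          setLIntegral_Ioo_comp_abs_sub_le (Ioo_subset_Icc_self hu) _
      _ = ENNReal.ofReal D := by
          rw [lintegral_Ioo_ofReal_rpow hp hts.le, ENNReal.ofReal_mul zero_le_two,
            ENNReal.ofReal_ofNat]
  calc expKernelIntegral p lam s t ≤ ∫⁻ _ in Ioo s t, ENNReal.ofReal D :=
        setLIntegral_mono' measurableSet_Ioo inner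
    _ = ENNReal.ofReal (D * (t - s)) := by
        rw [setLIntegral_const, Real.volume_Ioo, ← ENNReal.ofReal_mul hD0]
    _ = ENNReal.ofReal (2 / (p + 1) * (t - s) ^ (p + 2)) := by
        rw [hD, show p + 2 = p + 1 + 1 by ring, rpow_add_one hts.ne' (p + 1)]
        congr 1
        ring

lemma expKernelIntegral_le_div_rpow {p lam s t : ℝ} (hp : -1 < p) (hlam : 0 < lam) :
    expKernelIntegral p lam s t ≤ ENNReal.ofReal (2 * Gamma (p + 1) * (2 / lam) ^ (p + 2)) := by
  obtain ⟨c, hc, rfl⟩ : ∃ c, 0 < c ∧ lam = 2 * c := ⟨lam / 2, by positivity, by ring⟩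
  set G := (1 / c) ^ (p + 1) * Gamma (p + 1) with hG
  have hG0 : 0 ≤ G := mul_nonneg (by positivity) (Gamma_pos_of_pos (by linarith)).le
  -- `2t - u - v` dominates both `t - u` and `|u - v|`, so half of the decay rate controls each.
  have hexp : ∀ u ∈ Ioo s t, ∀ v ∈ Ioo s t,
      exp (-(2 * c) * (2 * t - u - v)) ≤ exp (-(c * (t - u))) * exp (-(c * |u - v|)) := by
    intro u hu v hv
    rw [← exp_add, exp_le_exp]
    have hu' := mul_pos hc (sub_pos.mpr hu.2)
    have hv' := mul_pos hc (sub_pos.mpr hv.2)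
    rcases abs_cases (u - v) with ⟨h, _⟩ | ⟨h, _⟩ <;> · rw [h]; nlinarith
  have inner : ∀ u ∈ Ioo s t, ∫⁻ v in Ioo s t,
      ENNReal.ofReal (exp (-(2 * c) * (2 * t - u - v)) * |u - v| ^ p)
        ≤ ENNReal.ofReal (exp (-(c * (t - u)))) * (2 * ENNReal.ofReal G) := by
    intro u hu
    calc ∫⁻ v in Ioo s t, ENNReal.ofReal (exp (-(2 * c) * (2 * t - u - v)) * |u - v| ^ p)
        ≤ ∫⁻ v in Ioo s t, ENNReal.ofReal (exp (-(c * (t - u))))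
            * ENNReal.ofReal (|u - v| ^ p * exp (-(c * |u - v|))) := by
          refine setLIntegral_mono' measurableSet_Ioo fun v hv => ?_
          rw [← ENNReal.ofReal_mul (exp_pos _).le]
          refine ENNReal.ofReal_le_ofReal ?_
          calc exp (-(2 * c) * (2 * t - u - v)) * |u - v| ^ p
              ≤ exp (-(c * (t - u))) * exp (-(c * |u - v|)) * |u - v| ^ p :=
                mul_le_mul_of_nonneg_right (hexp u hu v hv) (by positivity)
            _ = exp (-(c * (t - u))) * (|u - v| ^ p * exp (-(c * |u - v|))) := by ring
      _ = ENNReal.ofReal (exp (-(c * (t - u))))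
            * ∫⁻ v in Ioo s t, ENNReal.ofReal (|u - v| ^ p * exp (-(c * |u - v|))) :=
          lintegral_const_mul' _ _ ENNReal.ofReal_ne_top
      _ ≤ ENNReal.ofReal (exp (-(c * (t - u)))) * (2 * ENNReal.ofReal G) := by
          gcongr
          calc ∫⁻ v in Ioo s t, ENNReal.ofReal (|u - v| ^ p * exp (-(c * |u - v|)))
              ≤ 2 * ∫⁻ x in Ioo 0 (t - s), ENNReal.ofReal (x ^ p * exp (-(c * x))) :=
                setLIntegral_Ioo_comp_abs_sub_le (Ioo_subset_Icc_self hu)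
                  fun x => ENNReal.ofReal (x ^ p * exp (-(c * x)))
            _ ≤ 2 * ∫⁻ x in Ioi 0, ENNReal.ofReal (x ^ p * exp (-(c * x))) := by
                gcongr; exact Ioo_subset_Ioi_self
            _ = 2 * ENNReal.ofReal G := by
                rw [lintegral_Ioi_ofReal_rpow_mul_exp_neg_mul hp hc]
  have outer :
      ∫⁻ u in Ioo s t, ENNReal.ofReal (exp (-(c * (t - u)))) ≤ ENNReal.ofReal (1 / c) :=
    calc ∫⁻ u in Ioo s t, ENNReal.ofReal (exp (-(c * (t - u))))
        = ∫⁻ x in Ioo (t - t) (t - s), ENNReal.ofReal (x ^ (0 : ℝ) * exp (-(c * x))) := by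
          simp only [rpow_zero, one_mul]
          exact setLIntegral_Ioo_comp_const_sub (fun x => ENNReal.ofReal (exp (-(c * x)))) t s t
      _ ≤ ∫⁻ x in Ioi 0, ENNReal.ofReal (x ^ (0 : ℝ) * exp (-(c * x))) := by
          gcongr; rw [sub_self]; exact Ioo_subset_Ioi_self
      _ = ENNReal.ofReal (1 / c) := by
          rw [lintegral_Ioi_ofReal_rpow_mul_exp_neg_mul (by norm_num) hc]
          norm_num
  calc expKernelIntegral p (2 * c) s t
      ≤ ∫⁻ u in Ioo s t, ENNReal.ofReal (exp (-(c * (t - u)))) * (2 * ENNReal.ofReal G) :=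
        setLIntegral_mono' measurableSet_Ioo inner
    _ = (∫⁻ u in Ioo s t, ENNReal.ofReal (exp (-(c * (t - u))))) * (2 * ENNReal.ofReal G) :=
        lintegral_mul_const' _ _ (by finiteness)
    _ ≤ ENNReal.ofReal (1 / c) * (2 * ENNReal.ofReal G) := by gcongr
    _ = ENNReal.ofReal (2 * Gamma (p + 1) * (2 / (2 * c)) ^ (p + 2)) := by
        rw [← ENNReal.ofReal_ofNat 2, ← ENNReal.ofReal_mul zero_le_two,
          ← ENNReal.ofReal_mul (by positivity), hG,
          show 2 / (2 * c) = 1 / c by field_simp, show p + 2 = p + 1 + 1 by ring,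
          rpow_add_one (by positivity : 1 / c ≠ 0) (p + 1)]
        congr 1
        ring

lemma rpow_mul_le_max_mul_rpow {lam r d q x B K : ℝ} (hlam : 0 < lam) (hr : 0 < r)
    (hd : 0 ≤ d) (hdq : d ≤ q) (hB : 0 ≤ B) (hK : 0 ≤ K)
    (hxB : x ≤ B * r ^ q) (hxK : x ≤ K * lam ^ (-q)) :
    lam ^ d * x ≤ max B K * r ^ (q - d) := by
  have hrq : 0 ≤ r ^ (q - d) := by positivity
  rcases le_total (lam * r) 1 with hsmall | hlarge
  · calc lam ^ d * x ≤ lam ^ d * (B * r ^ q) := by gcongr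
      _ = B * r ^ (q - d) * (lam * r) ^ d := by
          rw [mul_rpow hlam.le hr.le, rpow_sub hr]
          field_simp
      _ ≤ B * r ^ (q - d) := mul_le_of_le_one_right (by positivity)
          (rpow_le_one (by positivity) hsmall hd)
      _ ≤ max B K * r ^ (q - d) := by gcongr; exact le_max_left B K
  · calc lam ^ d * x ≤ lam ^ d * (K * lam ^ (-q)) := by gcongr
      _ = K * r ^ (q - d) * (lam * r) ^ (-(q - d)) := by
          rw [rpow_neg (mul_pos hlam hr).le, mul_rpow hlam.le hr.le, rpow_neg hlam.le,
            rpow_sub hlam]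
          field_simp
      _ ≤ K * r ^ (q - d) := mul_le_of_le_one_right (by positivity)
          (rpow_le_one_of_one_le_of_nonpos hlarge (by linarith))
      _ ≤ max B K * r ^ (q - d) := by gcongr; exact le_max_right B K

noncomputable def expKernelConst (p : ℝ) : ℝ :=
  max (2 / (p + 1)) (2 * Gamma (p + 1) * 2 ^ (p + 2))

lemma expKernelConst_pos {p : ℝ} (hp : -1 < p) : 0 < expKernelConst p :=
  lt_max_of_lt_left (div_pos two_pos (by linarith))

lemma ofReal_rpow_mul_expKernelIntegral_le {p d lam s t : ℝ} (hp : -1 < p) (hd : 0 ≤ d)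
    (hdp : d ≤ p + 2) (hlam : 0 < lam) (hst : s < t) :
    ENNReal.ofReal (lam ^ d) * expKernelIntegral p lam s t
      ≤ ENNReal.ofReal (expKernelConst p * (t - s) ^ (p + 2 - d)) := by
  have hB : 0 ≤ 2 / (p + 1) := div_nonneg zero_le_two (by linarith)
  have hK : 0 ≤ 2 * Gamma (p + 1) * 2 ^ (p + 2) :=
    mul_nonneg (mul_nonneg zero_le_two (Gamma_pos_of_pos (by linarith)).le) (by positivity)
  have h1 := expKernelIntegral_le_rpow hp hlam.le hst
  have h2 := expKernelIntegral_le_div_rpow (s := s) (t := t) hp hlam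
  rw [div_rpow zero_le_two hlam.le, div_eq_mul_inv, ← rpow_neg hlam.le, ← mul_assoc] at h2
  rw [← ENNReal.ofReal_toReal (ne_top_of_le_ne_top ENNReal.ofReal_ne_top h1),
    ← ENNReal.ofReal_mul (by positivity)]
  exact ENNReal.ofReal_le_ofReal <| rpow_mul_le_max_mul_rpow hlam (sub_pos.mpr hst) hd hdp hB hK
    (ENNReal.toReal_le_of_le_ofReal (by positivity) h1)
    (ENNReal.toReal_le_of_le_ofReal (by positivity) h2)

lemma lintegral_lintegral_ofReal_mode_le {H δ lam s t : ℝ} (a : ℝ) (hH : 1 / 2 < H)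
    (hδ : δ ∈ Icc 0 H) (hlam : 0 < lam) (hst : s < t) :
    ∫⁻ u in Ioo s t, ∫⁻ v in Ioo s t, ENNReal.ofReal (lam ^ (2 * δ) *
        exp (-lam * (2 * t - u - v)) * a ^ 2 * (H * (2 * H - 1) * |u - v| ^ (2 * H - 2)))
      ≤ ENNReal.ofReal (a ^ 2) * ENNReal.ofReal
          (H * (2 * H - 1) * expKernelConst (2 * H - 2) * (t - s) ^ (2 * (H - δ))) := by
  have hα : 0 ≤ H * (2 * H - 1) := by nlinarith
  have hc : 0 ≤ a ^ 2 * (H * (2 * H - 1)) * lam ^ (2 * δ) := by positivity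
  have hsplit : ∀ u v, ENNReal.ofReal (lam ^ (2 * δ) * exp (-lam * (2 * t - u - v)) * a ^ 2 *
      (H * (2 * H - 1) * |u - v| ^ (2 * H - 2))) =
      ENNReal.ofReal (a ^ 2 * (H * (2 * H - 1)) * lam ^ (2 * δ))
        * ENNReal.ofReal (exp (-lam * (2 * t - u - v)) * |u - v| ^ (2 * H - 2)) := by
    intro u v
    rw [← ENNReal.ofReal_mul hc]
    congr 1
    ring
  have hJ := ofReal_rpow_mul_expKernelIntegral_le (p := 2 * H - 2) (d := 2 * δ) (by linarith)
    (by linarith [hδ.1]) (by linarith [hδ.2]) hlam hst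
  rw [show 2 * H - 2 + 2 - 2 * δ = 2 * (H - δ) by ring] at hJ
  simp_rw [hsplit, lintegral_const_mul' _ _ ENNReal.ofReal_ne_top]
  calc ENNReal.ofReal (a ^ 2 * (H * (2 * H - 1)) * lam ^ (2 * δ))
        * expKernelIntegral (2 * H - 2) lam s t
      = ENNReal.ofReal (a ^ 2) * (ENNReal.ofReal (H * (2 * H - 1))
          * (ENNReal.ofReal (lam ^ (2 * δ)) * expKernelIntegral (2 * H - 2) lam s t)) := by
        rw [ENNReal.ofReal_mul (by positivity), ENNReal.ofReal_mul (sq_nonneg _)]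
        ring
    _ ≤ ENNReal.ofReal (a ^ 2) * (ENNReal.ofReal (H * (2 * H - 1))
          * ENNReal.ofReal (expKernelConst (2 * H - 2) * (t - s) ^ (2 * (H - δ)))) := by
        gcongr
    _ = ENNReal.ofReal (a ^ 2) * ENNReal.ofReal
          (H * (2 * H - 1) * expKernelConst (2 * H - 2) * (t - s) ^ (2 * (H - δ))) := by
        rw [← ENNReal.ofReal_mul hα, mul_assoc (H * (2 * H - 1))]

/-- For `H ∈ (1/2, 1)`, `φ(y) = H(2H-1)|y|^{2H-2}`, positive eigenvalues
`(λ_i)` and a square-summable sequence `(a_i)`, there is `C > 0` depending only on `H`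
such that for every `δ ∈ [0, H]` and all `0 ≤ s < t`,
`∫_s^t ∫_s^t (Σ_i λ_i^{2δ} e^{-λ_i(2t-u-v)} a_i²) φ(u-v) du dv
  ≤ C (t-s)^{2(H-δ)} Σ_i a_i²`. -/
theorem stmt_3 (H : ℝ) (hH : H ∈ Set.Ioo (1/2 : ℝ) 1)
    (lam : ℕ → ℝ) (hlam : ∀ i, 0 < lam i)
    (a : ℕ → ℝ) (ha : Summable (fun i => a i ^ 2)) :
    ∃ C : ℝ, 0 < C ∧ ∀ δ : ℝ, δ ∈ Set.Icc 0 H → ∀ s t : ℝ, 0 ≤ s → s < t →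
      (∫ u in Set.Ioo s t, ∫ v in Set.Ioo s t,
          (∑' i : ℕ, lam i ^ (2 * δ) * Real.exp (-lam i * (2*t - u - v)) * a i ^ 2) *
            (H * (2*H - 1) * |u - v| ^ (2*H - 2)))
        ≤ C * (t - s) ^ (2 * (H - δ)) * ∑' i : ℕ, a i ^ 2 := by
  have hα : 0 < H * (2 * H - 1) := by nlinarith [hH.1]
  have hC : 0 < H * (2 * H - 1) * expKernelConst (2 * H - 2) :=
    mul_pos hα (expKernelConst_pos (by linarith [hH.1]))
  refine ⟨_, hC, fun δ hδ s t _ hst => ?_⟩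
  set f : ℕ → ℝ → ℝ → ℝ := fun i u v =>
    lam i ^ (2 * δ) * exp (-lam i * (2 * t - u - v)) * a i ^ 2 *
      (H * (2 * H - 1) * |u - v| ^ (2 * H - 2))
  have hf0 : ∀ i u v, 0 ≤ f i u v := fun i u v =>
    mul_nonneg (by have := hlam i; positivity) (mul_nonneg hα.le (by positivity))
  rw [← ENNReal.ofReal_le_ofReal_iff (by have := hC.le; positivity)]
  calc _ = ENNReal.ofReal (∫ u in Ioo s t, ∫ v in Ioo s t, ∑' i, f i u v) := by
        simp_rw [f, ← tsum_mul_right]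
    _ ≤ ∑' i, ∫⁻ u in Ioo s t, ∫⁻ v in Ioo s t, ENNReal.ofReal (f i u v) :=
        ofReal_integral_integral_tsum_le hf0 fun i => by fun_prop
    _ ≤ ∑' i, ENNReal.ofReal (a i ^ 2) * ENNReal.ofReal
          (H * (2 * H - 1) * expKernelConst (2 * H - 2) * (t - s) ^ (2 * (H - δ))) :=
        ENNReal.tsum_le_tsum fun i => lintegral_lintegral_ofReal_mode_le (a i) hH.1 hδ (hlam i) hst
    _ = _ := by
        rw [ENNReal.tsum_mul_right, ← ENNReal.ofReal_tsum_of_nonneg (fun i => sq_nonneg _) ha,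
          ← ENNReal.ofReal_mul (tsum_nonneg fun i => sq_nonneg _), mul_comm]
end

section
/- Let H ∈ (1/2, 1) and β ∈ (1−2H, 1], set α_H = H(2H−1) and φ(y) = α_H |y|^{2H−2} for y ≠ 0. Then there exists a constant C > 0, depending only on H and β, such that for every τ > 0, every integer m ≥ 1 (with grid points t_k = kτ for k = 0, 1, ..., m) and every λ > 0, one has Σ_{i=0}^{m−1} Σ_{j=0}^{m−1} ∫_{t_j}^{t_{j+1}} ∫_{t_i}^{t_{i+1}} ( e^{−λ(t_m−u)} − e^{−λ(t_m−t_i)} ) ( e^{−λ(t_m−v)} − e^{−λ(t_m−t_j)} ) φ(u−v) du dv ≤ C τ^{2H+β−1} λ^{β−1}. -/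
/-!
On a cell `[t_i, t_{i+1}]` the factor `e^{-λ(t_m-u)} - e^{-λ(t_m-t_i)}` lies between `0` and
`min(1, λτ) e^{-λ(t_m-u)}`, so the double sum is at most `min(1, λτ)² α_H` times the integral of
`e^{-λ(t_m-u)} e^{-λ(t_m-v)} |u-v|^{2H-2}` over `[0, t_m]²`. Splitting the inner integral at `u = v`
and comparing both halves with Gamma integrals bounds this by `(3/2) Γ(2H-1) λ^{-2H}`, uniformly in
`t_m`. Finally `min(1, λτ)² ≤ (λτ)^{2H+β-1}` because `0 < 2H+β-1 ≤ 2`.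
-/

open MeasureTheory Set Real intervalIntegral

lemma setIntegral_Ioo_eq_intervalIntegral {f : ℝ → ℝ} {a b : ℝ} (hab : a ≤ b) :
    ∫ x in Ioo a b, f x = ∫ x in a..b, f x := by
  rw [integral_of_le hab, integral_Ioc_eq_integral_Ioo]

lemma integral_mono_of_nonneg_on {f g : ℝ → ℝ} {a b : ℝ} (hab : a ≤ b)
    (hf : ∀ x ∈ Icc a b, 0 ≤ f x) (hg : IntervalIntegrable g volume a b)
    (hfg : ∀ x ∈ Icc a b, f x ≤ g x) :
    ∫ x in a..b, f x ≤ ∫ x in a..b, g x := by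
  rw [integral_of_le hab, integral_of_le hab]
  refine integral_mono_of_nonneg ?_ (hg.1) ?_
  all_goals filter_upwards [ae_restrict_mem measurableSet_Ioc] with x hx
  exacts [hf x (Ioc_subset_Icc_self hx), hfg x (Ioc_subset_Icc_self hx)]

lemma sum_sum_integral_integral_adjacent_intervals {f : ℝ → ℝ → ℝ} {t : ℕ → ℝ} {m : ℕ}
    (hu : ∀ v, ∀ i < m, IntervalIntegrable (f · v) volume (t i) (t (i + 1)))
    (hv : ∀ i < m, ∀ j < m,
      IntervalIntegrable (fun v => ∫ u in t i..t (i + 1), f u v) volume (t j) (t (j + 1))) :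
    ∑ i ∈ Finset.range m, ∑ j ∈ Finset.range m,
        ∫ v in t j..t (j + 1), ∫ u in t i..t (i + 1), f u v
      = ∫ v in t 0..t m, ∫ u in t 0..t m, f u v := by
  have hinner : (fun v => ∫ u in t 0..t m, f u v)
      = ∑ i ∈ Finset.range m, fun v => ∫ u in t i..t (i + 1), f u v := by
    ext v
    rw [Finset.sum_apply, sum_integral_adjacent_intervals (hu v)]
  rw [Finset.sum_comm, ← sum_integral_adjacent_intervals, hinner]
  · refine Finset.sum_congr rfl fun j hj => ?_
    rw [Finset.sum_fn, integral_finsetSum fun i hi =>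
      hv i (Finset.mem_range.1 hi) j (Finset.mem_range.1 hj)]
  · intro j hj
    rw [hinner]
    exact IntervalIntegrable.sum _ fun i hi => hv i (Finset.mem_range.1 hi) j hj

lemma one_sub_exp_neg_le_min (x : ℝ) : 1 - rexp (-x) ≤ min 1 x :=
  le_min (by linarith [exp_pos (-x)]) (by linarith [add_one_le_exp (-x)])

lemma exp_sub_exp_nonneg {l T s w : ℝ} (hl : 0 ≤ l) (hsw : s ≤ w) :
    0 ≤ rexp (-l * (T - w)) - rexp (-l * (T - s)) :=
  sub_nonneg.2 (exp_le_exp.2 (by nlinarith))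

lemma exp_sub_exp_le_min_mul {l T s w τ : ℝ} (hl : 0 ≤ l) (hwτ : w ≤ s + τ) :
    rexp (-l * (T - w)) - rexp (-l * (T - s)) ≤ min 1 (l * τ) * rexp (-l * (T - w)) := by
  have hsplit : rexp (-l * (T - s)) = rexp (-l * (T - w)) * rexp (-(l * (w - s))) := by
    rw [← exp_add]; ring_nf
  have hmin : 1 - rexp (-(l * (w - s))) ≤ min 1 (l * τ) :=
    (one_sub_exp_neg_le_min _).trans (min_le_min_left _ (by nlinarith))
  rw [hsplit]
  nlinarith [exp_pos (-l * (T - w))]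

lemma min_one_sq_le_rpow {x θ : ℝ} (hx : 0 ≤ x) (hθ0 : 0 ≤ θ) (hθ2 : θ ≤ 2) :
    min 1 x ^ 2 ≤ x ^ θ := by
  rcases le_total 1 x with h | h
  · rw [min_eq_left h, one_pow]
    exact one_le_rpow h hθ0
  · rw [min_eq_right h, ← rpow_natCast]
    exact rpow_le_rpow_of_exponent_ge' hx h hθ0 (by norm_num; exact hθ2)

lemma min_one_sq_div_rpow_le {l τ θ κ : ℝ} (hl : 0 < l) (hτ : 0 ≤ τ) (hθ0 : 0 ≤ θ) (hθ2 : θ ≤ 2) :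
    min 1 (l * τ) ^ 2 / l ^ κ ≤ τ ^ θ * l ^ (θ - κ) := by
  rw [rpow_sub hl, ← mul_div_assoc, mul_comm (τ ^ θ), ← mul_rpow hl.le hτ]
  gcongr
  exact min_one_sq_le_rpow (by positivity) hθ0 hθ2

lemma locallyIntegrable_abs_rpow {a : ℝ} (ha : -1 < a) :
    LocallyIntegrable (fun x : ℝ => |x| ^ a) := by
  refine locallyIntegrable_of_norm_le_rpow (μ := volume) (by simp) (C := 1) (α := -a)
    (by simp; linarith) (ae_of_all _ fun x => ?_)
    (continuous_abs.measurable.pow_const a).aestronglyMeasurable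
  simp [abs_of_nonneg (rpow_nonneg (abs_nonneg x) a)]

lemma intervalIntegrable_abs_sub_rpow {a : ℝ} (ha : -1 < a) (v p q : ℝ) :
    IntervalIntegrable (fun u => |u - v| ^ a) volume p q := by
  simpa using ((locallyIntegrable_abs_rpow ha).integrableOn_isCompact isCompact_uIcc
    |>.intervalIntegrable (a := p - v) (b := q - v)).comp_sub_right v

lemma intervalIntegrable_exp_mul_abs_sub_rpow {a : ℝ} (ha : -1 < a) (l T v p q : ℝ) :
    IntervalIntegrable (fun u => rexp (-l * (T - u)) * |u - v| ^ a) volume p q :=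
  (intervalIntegrable_abs_sub_rpow ha v p q).continuousOn_mul (by fun_prop)

lemma integral_rpow_mul_exp_neg_mul_le {s r T : ℝ} (hs : -1 < s) (hr : 0 < r) (hT : 0 ≤ T) :
    ∫ t in 0..T, t ^ s * rexp (-(r * t)) ≤ Gamma (s + 1) / r ^ (s + 1) := by
  have hval := integral_rpow_mul_exp_neg_mul_Ioi (a := s + 1) (by linarith) hr
  rw [add_sub_cancel_right, one_div, inv_rpow hr.le, inv_mul_eq_div] at hval
  rw [integral_of_le hT, ← hval]
  refine setIntegral_mono_set ?_ ?_ Ioc_subset_Ioi_self.eventuallyLE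
  · simpa [neg_mul] using integrableOn_rpow_mul_exp_neg_mul_rpow hs one_pos hr
  · filter_upwards [ae_restrict_mem measurableSet_Ioi] with t ht
    exact mul_nonneg (rpow_nonneg ht.le s) (exp_pos _).le

lemma integral_exp_mul_abs_sub_rpow_le {a l T v : ℝ} (ha : -1 < a) (hl : 0 < l)
    (hv0 : 0 ≤ v) (hvT : v ≤ T) :
    ∫ u in 0..T, rexp (-l * (T - u)) * |u - v| ^ a
      ≤ (T - v) ^ (a + 1) / (a + 1) + rexp (-l * (T - v)) * (Gamma (a + 1) / l ^ (a + 1)) := by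
  rw [← integral_add_adjacent_intervals (b := v) (intervalIntegrable_exp_mul_abs_sub_rpow ha ..)
    (intervalIntegrable_exp_mul_abs_sub_rpow ha ..), add_comm]
  apply add_le_add
  · calc ∫ u in v..T, rexp (-l * (T - u)) * |u - v| ^ a
        ≤ ∫ u in v..T, |u - v| ^ a :=
          integral_mono_on hvT (intervalIntegrable_exp_mul_abs_sub_rpow ha ..)
            (intervalIntegrable_abs_sub_rpow ha ..) fun u hu =>
              mul_le_of_le_one_left (rpow_nonneg (abs_nonneg _) a)
                (exp_le_one_iff.2 (by nlinarith [hu.2]))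
      _ = ∫ x in 0..T - v, x ^ a := by
          rw [integral_comp_sub_right (fun x => |x| ^ a), sub_self]
          refine integral_congr fun x hx => ?_
          rw [uIcc_of_le (sub_nonneg.2 hvT)] at hx
          simp only [abs_of_nonneg hx.1]
      _ = (T - v) ^ (a + 1) / (a + 1) := by
          rw [integral_rpow (Or.inl ha), zero_rpow (by linarith), sub_zero]
  · calc ∫ u in 0..v, rexp (-l * (T - u)) * |u - v| ^ a
        = ∫ u in 0..v, rexp (-l * (T - v)) * ((v - u) ^ a * rexp (-(l * (v - u)))) := by
          refine integral_congr fun u hu => ?_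
          rw [uIcc_of_le hv0] at hu
          rw [abs_sub_comm, abs_of_nonneg (sub_nonneg.2 hu.2), mul_left_comm, ← exp_add]
          ring_nf
      _ = rexp (-l * (T - v)) * ∫ x in 0..v, x ^ a * rexp (-(l * x)) := by
          rw [intervalIntegral.integral_const_mul,
            integral_comp_sub_left (fun x => x ^ a * rexp (-(l * x))), sub_self, sub_zero]
      _ ≤ rexp (-l * (T - v)) * (Gamma (a + 1) / l ^ (a + 1)) :=
          mul_le_mul_of_nonneg_left (integral_rpow_mul_exp_neg_mul_le ha hl hv0) (exp_pos _).le

noncomputable def weightedKernel (a l T u v : ℝ) : ℝ :=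
  rexp (-l * (T - v)) * (rexp (-l * (T - u)) * |u - v| ^ a)

lemma weightedKernel_nonneg (a l T u v : ℝ) : 0 ≤ weightedKernel a l T u v := by
  unfold weightedKernel; positivity

lemma intervalIntegrable_weightedKernel {a : ℝ} (ha : -1 < a) (l T v p q : ℝ) :
    IntervalIntegrable (weightedKernel a l T · v) volume p q :=
  (intervalIntegrable_exp_mul_abs_sub_rpow ha l T v p q).const_mul _

lemma integral_weightedKernel_le {a l T v : ℝ} (ha : -1 < a) (hl : 0 < l)
    (hv0 : 0 ≤ v) (hvT : v ≤ T) :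
    ∫ u in 0..T, weightedKernel a l T u v
      ≤ (T - v) ^ (a + 1) * rexp (-(l * (T - v))) / (a + 1)
        + Gamma (a + 1) / l ^ (a + 1) * rexp (-(2 * l * (T - v))) := by
  have hsq : rexp (-l * (T - v)) * rexp (-l * (T - v)) = rexp (-(2 * l * (T - v))) := by
    rw [← exp_add]; ring_nf
  calc ∫ u in 0..T, weightedKernel a l T u v
      = rexp (-l * (T - v)) * ∫ u in 0..T, rexp (-l * (T - u)) * |u - v| ^ a :=
        intervalIntegral.integral_const_mul _ _
    _ ≤ rexp (-l * (T - v)) * ((T - v) ^ (a + 1) / (a + 1)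
          + rexp (-l * (T - v)) * (Gamma (a + 1) / l ^ (a + 1))) :=
        mul_le_mul_of_nonneg_left (integral_exp_mul_abs_sub_rpow_le ha hl hv0 hvT) (exp_pos _).le
    _ = _ := by rw [mul_add, ← mul_assoc, hsq, neg_mul]; ring

lemma integral_weightedKernel_le_const {a l T v : ℝ} (ha : -1 < a) (hl : 0 < l)
    (hv0 : 0 ≤ v) (hvT : v ≤ T) :
    ∫ u in 0..T, weightedKernel a l T u v
      ≤ T ^ (a + 1) / (a + 1) + Gamma (a + 1) / l ^ (a + 1) := by
  have ha1 : 0 < a + 1 := by linarith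
  have hpow : (T - v) ^ (a + 1) ≤ T ^ (a + 1) := rpow_le_rpow (by linarith) (by linarith) ha1.le
  have hexp1 : rexp (-(l * (T - v))) ≤ 1 := exp_le_one_iff.2 (by nlinarith)
  have hexp2 : rexp (-(2 * l * (T - v))) ≤ 1 := exp_le_one_iff.2 (by nlinarith)
  refine (integral_weightedKernel_le ha hl hv0 hvT).trans (add_le_add ?_ ?_)
  · gcongr
    calc (T - v) ^ (a + 1) * rexp (-(l * (T - v))) ≤ (T - v) ^ (a + 1) :=
          mul_le_of_le_one_right (rpow_nonneg (by linarith) _) hexp1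
      _ ≤ T ^ (a + 1) := hpow
  · exact mul_le_of_le_one_right (by positivity) hexp2

lemma intervalIntegrable_integral_weightedKernel {a l T p q r s : ℝ} (ha : -1 < a) (hl : 0 < l)
    (hp : 0 ≤ p) (hpq : p ≤ q) (hqT : q ≤ T) (hr : 0 ≤ r) (hrs : r ≤ s) (hsT : s ≤ T) :
    IntervalIntegrable (fun v => ∫ u in p..q, weightedKernel a l T u v) volume r s := by
  rw [intervalIntegrable_iff_integrableOn_Icc_of_le hrs]
  refine Measure.integrableOn_of_bounded measure_Icc_lt_top.ne ?_
    (M := T ^ (a + 1) / (a + 1) + Gamma (a + 1) / l ^ (a + 1)) ?_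
  · simp_rw [integral_of_le hpq]
    refine (StronglyMeasurable.integral_prod_right (f := fun v u => weightedKernel a l T u v)
      ?_).aestronglyMeasurable
    unfold weightedKernel
    exact Measurable.stronglyMeasurable (by fun_prop)
  · filter_upwards [ae_restrict_mem measurableSet_Icc] with v hv
    have hv0 : 0 ≤ v := hr.trans hv.1
    have hvT : v ≤ T := hv.2.trans hsT
    rw [Real.norm_eq_abs, abs_of_nonneg (integral_nonneg hpq fun u _ => weightedKernel_nonneg ..)]
    refine le_trans ?_ (integral_weightedKernel_le_const ha hl hv0 hvT)
    exact integral_mono_interval hp hpq hqT (ae_of_all _ fun u => weightedKernel_nonneg ..)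
      (intervalIntegrable_weightedKernel ha ..)

lemma integral_integral_weightedKernel_le {a l T : ℝ} (ha : -1 < a) (hl : 0 < l) (hT : 0 ≤ T) :
    ∫ v in 0..T, ∫ u in 0..T, weightedKernel a l T u v ≤ 3 / 2 * Gamma (a + 1) / l ^ (a + 2) := by
  have ha1 : 0 < a + 1 := by linarith
  let G := Gamma (a + 1) / l ^ (a + 1)
  let g : ℝ → ℝ := fun y => y ^ (a + 1) * rexp (-(l * y)) / (a + 1) + G * rexp (-(2 * l * y))
  have hg : Continuous g := by fun_prop (disch := exact ha1.le)
  have hexp : ∫ y in 0..T, rexp (-(2 * l * y)) ≤ Gamma (0 + 1) / (2 * l) ^ (0 + 1 : ℝ) := by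
    simpa only [rpow_zero, one_mul] using
      integral_rpow_mul_exp_neg_mul_le (s := 0) (by norm_num) (by positivity) hT
  calc ∫ v in 0..T, ∫ u in 0..T, weightedKernel a l T u v
      ≤ ∫ v in 0..T, g (T - v) :=
        integral_mono_on hT
          (intervalIntegrable_integral_weightedKernel ha hl le_rfl hT le_rfl le_rfl hT le_rfl)
          ((hg.comp (continuous_sub_left T)).intervalIntegrable _ _)
          fun v hv => integral_weightedKernel_le ha hl hv.1 hv.2
    _ = ∫ y in 0..T, g y := by simp [intervalIntegral.integral_comp_sub_left g T]
    _ = (∫ y in 0..T, y ^ (a + 1) * rexp (-(l * y))) / (a + 1)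
          + G * ∫ y in 0..T, rexp (-(2 * l * y)) := by
        rw [intervalIntegral.integral_add
            ((by fun_prop (disch := exact ha1.le) : Continuous _).intervalIntegrable _ _)
            ((by fun_prop : Continuous _).intervalIntegrable _ _),
          intervalIntegral.integral_div, intervalIntegral.integral_const_mul]
    _ ≤ Gamma (a + 1 + 1) / l ^ (a + 1 + 1) / (a + 1)
          + G * (Gamma (0 + 1) / (2 * l) ^ (0 + 1 : ℝ)) := by
        gcongr
        exact integral_rpow_mul_exp_neg_mul_le (by linarith) hl hT
    _ = 3 / 2 * Gamma (a + 1) / l ^ (a + 2) := by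
        rw [Gamma_add_one ha1.ne', show a + 2 = a + 1 + 1 by ring, rpow_add_one hl.ne',
          zero_add, Gamma_one, rpow_one]
        simp only [G]
        field_simp
        ring

lemma integral_integral_box_le {a l T τ α p q r s : ℝ} (ha : -1 < a) (hl : 0 < l) (hα : 0 ≤ α)
    (hp : 0 ≤ p) (hpq : p ≤ q) (hqp : q ≤ p + τ) (hqT : q ≤ T)
    (hr : 0 ≤ r) (hrs : r ≤ s) (hsr : s ≤ r + τ) (hsT : s ≤ T) :
    ∫ v in r..s, ∫ u in p..q, (rexp (-l * (T - u)) - rexp (-l * (T - p))) *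
        (rexp (-l * (T - v)) - rexp (-l * (T - r))) * (α * |u - v| ^ a)
      ≤ min 1 (l * τ) ^ 2 * α * ∫ v in r..s, ∫ u in p..q, weightedKernel a l T u v := by
  have hM : 0 ≤ min 1 (l * τ) := le_min zero_le_one (mul_nonneg hl.le (by linarith))
  have hF : ∀ u ∈ Icc p q, ∀ v ∈ Icc r s, 0 ≤ (rexp (-l * (T - u)) - rexp (-l * (T - p))) *
      (rexp (-l * (T - v)) - rexp (-l * (T - r))) * (α * |u - v| ^ a) := fun u hu v hv =>
    mul_nonneg (mul_nonneg (exp_sub_exp_nonneg hl.le hu.1) (exp_sub_exp_nonneg hl.le hv.1))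
      (mul_nonneg hα (rpow_nonneg (abs_nonneg _) _))
  rw [← intervalIntegral.integral_const_mul]
  refine integral_mono_of_nonneg_on hrs (fun v hv => integral_nonneg hpq fun u hu => hF u hu v hv)
    ((intervalIntegrable_integral_weightedKernel ha hl hp hpq hqT hr hrs hsT).const_mul _)
    fun v hv => ?_
  rw [← intervalIntegral.integral_const_mul]
  refine integral_mono_of_nonneg_on hpq (fun u hu => hF u hu v hv)
    ((intervalIntegrable_weightedKernel ha ..).const_mul _) fun u hu => ?_
  calc (rexp (-l * (T - u)) - rexp (-l * (T - p))) *
        (rexp (-l * (T - v)) - rexp (-l * (T - r))) * (α * |u - v| ^ a)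
      ≤ (min 1 (l * τ) * rexp (-l * (T - u))) * (min 1 (l * τ) * rexp (-l * (T - v))) *
          (α * |u - v| ^ a) := by
        gcongr
        · exact exp_sub_exp_nonneg hl.le hv.1
        · exact exp_sub_exp_le_min_mul hl.le (hu.2.trans hqp)
        · exact exp_sub_exp_le_min_mul hl.le (hv.2.trans hsr)
    _ = min 1 (l * τ) ^ 2 * α * weightedKernel a l T u v := by unfold weightedKernel; ring

lemma grid_cell_bounds {τ : ℝ} (hτ : 0 ≤ τ) {i m : ℕ} (hi : i < m) :
    0 ≤ (i : ℝ) * τ ∧ (i : ℝ) * τ ≤ ((i : ℝ) + 1) * τ ∧ ((i : ℝ) + 1) * τ ≤ m * τ :=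
  ⟨by positivity, by nlinarith, mul_le_mul_of_nonneg_right (by exact_mod_cast hi) hτ⟩

lemma sum_sum_integral_integral_weightedKernel_grid {a l τ : ℝ} (ha : -1 < a) (hl : 0 < l)
    (hτ : 0 ≤ τ) (m : ℕ) :
    ∑ i ∈ Finset.range m, ∑ j ∈ Finset.range m,
        ∫ v in (j : ℝ) * τ..((j : ℝ) + 1) * τ, ∫ u in (i : ℝ) * τ..((i : ℝ) + 1) * τ,
          weightedKernel a l (m * τ) u v
      = ∫ v in 0..(m : ℝ) * τ, ∫ u in 0..(m : ℝ) * τ, weightedKernel a l (m * τ) u v := by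
  have h := sum_sum_integral_integral_adjacent_intervals (m := m)
    (f := weightedKernel a l (m * τ)) (t := fun k => (k : ℝ) * τ)
    (fun v i _ => intervalIntegrable_weightedKernel ha ..) fun i hi j hj => by
      obtain ⟨hi0, hi1, hi2⟩ := grid_cell_bounds hτ hi
      obtain ⟨hj0, hj1, hj2⟩ := grid_cell_bounds hτ hj
      push_cast
      exact intervalIntegrable_integral_weightedKernel ha hl hi0 hi1 hi2 hj0 hj1 hj2
  push_cast at h
  rwa [zero_mul] at h

lemma setIntegral_setIntegral_grid_cell_le {a l τ α : ℝ} {i j m : ℕ} (ha : -1 < a) (hl : 0 < l)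
    (hτ : 0 ≤ τ) (hα : 0 ≤ α) (hi : i < m) (hj : j < m) :
    ∫ v in Ioo ((j : ℝ) * τ) (((j : ℝ) + 1) * τ), ∫ u in Ioo ((i : ℝ) * τ) (((i : ℝ) + 1) * τ),
        (rexp (-l * (m * τ - u)) - rexp (-l * (m * τ - i * τ))) *
        (rexp (-l * (m * τ - v)) - rexp (-l * (m * τ - j * τ))) * (α * |u - v| ^ a)
      ≤ min 1 (l * τ) ^ 2 * α * ∫ v in (j : ℝ) * τ..((j : ℝ) + 1) * τ,
          ∫ u in (i : ℝ) * τ..((i : ℝ) + 1) * τ, weightedKernel a l (m * τ) u v := by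
  obtain ⟨hi0, hi1, hi2⟩ := grid_cell_bounds hτ hi
  obtain ⟨hj0, hj1, hj2⟩ := grid_cell_bounds hτ hj
  simp_rw [setIntegral_Ioo_eq_intervalIntegral hi1, setIntegral_Ioo_eq_intervalIntegral hj1]
  exact integral_integral_box_le ha hl hα hi0 hi1 (by linarith) hi2 hj0 hj1 (by linarith) hj2

/-- For `H ∈ (1/2, 1)`, `β ∈ (1-2H, 1]` and
`φ(y) = H(2H-1)|y|^{2H-2}`, there is `C > 0` depending only on `H` and `β` such that
for every step size `τ > 0`, every `m ≥ 1` (grid points `t_k = kτ`) and every `λ > 0`,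
`Σ_{i,j=0}^{m-1} ∫_{t_j}^{t_{j+1}} ∫_{t_i}^{t_{i+1}}
  (e^{-λ(t_m-u)} - e^{-λ(t_m-t_i)}) (e^{-λ(t_m-v)} - e^{-λ(t_m-t_j)}) φ(u-v) du dv
  ≤ C τ^{2H+β-1} λ^{β-1}`. -/
theorem stmt_13 (H : ℝ) (hH : H ∈ Set.Ioo (1/2 : ℝ) 1)
    (β : ℝ) (hβ : β ∈ Set.Ioc (1 - 2*H) 1) :
    ∃ C : ℝ, 0 < C ∧ ∀ τ : ℝ, 0 < τ → ∀ m : ℕ, 1 ≤ m → ∀ l : ℝ, 0 < l →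
      (∑ i ∈ Finset.range m, ∑ j ∈ Finset.range m,
        ∫ v in Set.Ioo ((j : ℝ) * τ) (((j : ℝ) + 1) * τ),
          ∫ u in Set.Ioo ((i : ℝ) * τ) (((i : ℝ) + 1) * τ),
            (Real.exp (-l * ((m : ℝ) * τ - u)) - Real.exp (-l * ((m : ℝ) * τ - (i : ℝ) * τ))) *
            (Real.exp (-l * ((m : ℝ) * τ - v)) - Real.exp (-l * ((m : ℝ) * τ - (j : ℝ) * τ))) *
            (H * (2*H - 1) * |u - v| ^ (2*H - 2)))
        ≤ C * τ ^ (2*H + β - 1) * l ^ (β - 1) := by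
  obtain ⟨hH1, hH2⟩ := hH
  obtain ⟨hβ1, hβ2⟩ := hβ
  have ha : -1 < 2 * H - 2 := by linarith
  have hα : 0 < H * (2 * H - 1) := by nlinarith
  have hΓ : 0 < Gamma (2 * H - 1) := Gamma_pos_of_pos (by linarith)
  refine ⟨3 / 2 * Gamma (2 * H - 1) * (H * (2 * H - 1)), by positivity, ?_⟩
  intro τ hτ m _ l hl
  have hdouble := integral_integral_weightedKernel_le ha hl (by positivity : 0 ≤ (m : ℝ) * τ)
  rw [show 2 * H - 2 + 1 = 2 * H - 1 by ring, show 2 * H - 2 + 2 = 2 * H by ring] at hdouble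
  have hpow := min_one_sq_div_rpow_le (κ := 2 * H) hl hτ.le (by linarith : 0 ≤ 2 * H + β - 1)
    (by linarith)
  rw [show 2 * H + β - 1 - 2 * H = β - 1 by ring] at hpow
  calc _ ≤ ∑ i ∈ Finset.range m, ∑ j ∈ Finset.range m, min 1 (l * τ) ^ 2 * (H * (2 * H - 1)) *
        ∫ v in (j : ℝ) * τ..((j : ℝ) + 1) * τ, ∫ u in (i : ℝ) * τ..((i : ℝ) + 1) * τ,
          weightedKernel (2 * H - 2) l (m * τ) u v :=
        Finset.sum_le_sum fun i hi => Finset.sum_le_sum fun j hj =>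
          setIntegral_setIntegral_grid_cell_le ha hl hτ.le hα.le (Finset.mem_range.1 hi)
            (Finset.mem_range.1 hj)
    _ = min 1 (l * τ) ^ 2 * (H * (2 * H - 1)) * ∫ v in 0..(m : ℝ) * τ,
          ∫ u in 0..(m : ℝ) * τ, weightedKernel (2 * H - 2) l (m * τ) u v := by
        simp_rw [← sum_sum_integral_integral_weightedKernel_grid ha hl hτ.le, Finset.mul_sum]
    _ ≤ min 1 (l * τ) ^ 2 * (H * (2 * H - 1)) * (3 / 2 * Gamma (2 * H - 1) / l ^ (2 * H)) := by
        gcongr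
    _ = 3 / 2 * Gamma (2 * H - 1) * (H * (2 * H - 1)) * (min 1 (l * τ) ^ 2 / l ^ (2 * H)) := by
        ring
    _ ≤ 3 / 2 * Gamma (2 * H - 1) * (H * (2 * H - 1)) * (τ ^ (2 * H + β - 1) * l ^ (β - 1)) := by
        gcongr
    _ = _ := by ring
end

section
/- Let H ∈ (1/2, 1) and β ∈ (1−2H, 1], set α_H = H(2H−1) and φ(y) = α_H |y|^{2H−2} for y ≠ 0. Then there exists a constant C > 0, depending only on H and β, such that for every τ > 0 and λ > 0 with τλ > 1, and every integer m ≥ 1 (with grid points t_k = kτ), one has Σ_{i=0}^{m−1} Σ_{j=0}^{m−1} ∫_{t_j}^{t_{j+1}} ∫_{t_i}^{t_{i+1}} (1+τλ)^{−(m−i)} (1+τλ)^{−(m−j)} φ(u−v) du dv ≤ C τ^{2H+β−1} λ^{β−1}. -/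
open MeasureTheory Set Real

/-!
For `-1 < p ≤ 0`, the integral of `|x| ^ p` over an interval of length `L` is at most
`2 L ^ (p + 1) / (p + 1)`: split at `0` and use the subadditivity of `x ↦ x ^ (p + 1)`.
With `p = 2H - 2` this bounds every cell integral of the kernel by `2H τ ^ (2H)`, independently
of the cell. The weights then factor into the square of `∑ i, (1 + τλ)⁻¹ ^ (m - i)`, a partial
geometric series bounded by `(τλ)⁻¹`. Finally `(τλ)⁻² ≤ (τλ) ^ (β - 1)` because `τλ > 1` and
`β > 1 - 2H > -1`, which gives the claim with `C = 2`.
-/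

lemma intervalIntegrable_abs_rpow {p : ℝ} (hp : -1 < p) (a b : ℝ) :
    IntervalIntegrable (fun x : ℝ => |x| ^ p) volume a b := by
  have from_zero_of_nonneg : ∀ c : ℝ, 0 ≤ c →
      IntervalIntegrable (fun x : ℝ => |x| ^ p) volume 0 c := by
    intro c hc
    have h := intervalIntegral.intervalIntegrable_rpow' hp (a := 0) (b := c)
    rw [intervalIntegrable_iff, uIoc_of_le hc] at h ⊢
    exact h.congr_fun (fun x hx => by rw [abs_of_pos hx.1]) measurableSet_Ioc
  have from_zero : ∀ c : ℝ, IntervalIntegrable (fun x : ℝ => |x| ^ p) volume 0 c := by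
    intro c
    rcases le_total 0 c with hc | hc
    · exact from_zero_of_nonneg c hc
    · rw [IntervalIntegrable.iff_comp_neg, neg_zero]
      simpa only [abs_neg] using from_zero_of_nonneg (-c) (by linarith)
  exact (from_zero a).symm.trans (from_zero b)

lemma integral_abs_rpow_le_of_nonneg {p A B : ℝ} (hp : -1 < p) (hp0 : p ≤ 0)
    (hA : 0 ≤ A) (hAB : A ≤ B) :
    ∫ x in A..B, |x| ^ p ≤ (B - A) ^ (p + 1) / (p + 1) := by
  have hq : 0 < p + 1 := by linarith
  have habs : ∫ x in A..B, |x| ^ p = ∫ x in A..B, x ^ p :=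
    intervalIntegral.integral_congr fun x hx => by
      rw [uIcc_of_le hAB] at hx
      simp only [abs_of_nonneg (hA.trans hx.1)]
  have hsub : B ^ (p + 1) ≤ (B - A) ^ (p + 1) + A ^ (p + 1) := by
    simpa using Real.rpow_add_le_add_rpow (sub_nonneg.2 hAB) hA hq.le (by linarith)
  rw [habs, integral_rpow (Or.inl hp)]
  gcongr
  linarith

lemma integral_abs_rpow_le_of_nonpos {p A B : ℝ} (hp : -1 < p) (hp0 : p ≤ 0)
    (hB : B ≤ 0) (hAB : A ≤ B) :
    ∫ x in A..B, |x| ^ p ≤ (B - A) ^ (p + 1) / (p + 1) := by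
  have h := integral_abs_rpow_le_of_nonneg hp hp0 (neg_nonneg.2 hB) (neg_le_neg hAB)
  rw [← intervalIntegral.integral_comp_neg, neg_sub_neg] at h
  simpa only [abs_neg] using h

lemma integral_abs_rpow_le {p A B : ℝ} (hp : -1 < p) (hp0 : p ≤ 0) (hAB : A ≤ B) :
    ∫ x in A..B, |x| ^ p ≤ 2 * (B - A) ^ (p + 1) / (p + 1) := by
  have hq : 0 < p + 1 := by linarith
  rw [mul_div_assoc]
  have hbound_nonneg : 0 ≤ (B - A) ^ (p + 1) / (p + 1) := by positivity
  rcases le_total 0 A with hA | hA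
  · linarith [integral_abs_rpow_le_of_nonneg hp hp0 hA hAB]
  rcases le_total B 0 with hB | hB
  · linarith [integral_abs_rpow_le_of_nonpos hp hp0 hB hAB]
  have hleft : ∫ x in A..0, |x| ^ p ≤ (B - A) ^ (p + 1) / (p + 1) :=
    (integral_abs_rpow_le_of_nonpos hp hp0 le_rfl hA).trans (by gcongr)
  have hright : ∫ x in 0..B, |x| ^ p ≤ (B - A) ^ (p + 1) / (p + 1) :=
    (integral_abs_rpow_le_of_nonneg hp hp0 le_rfl hB).trans (by gcongr)
  rw [← intervalIntegral.integral_add_adjacent_intervals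
    (intervalIntegrable_abs_rpow hp A 0) (intervalIntegrable_abs_rpow hp 0 B)]
  linarith

lemma setIntegral_abs_sub_rpow_le {p a a' : ℝ} (hp : -1 < p) (hp0 : p ≤ 0) (ha : a ≤ a')
    (v : ℝ) : ∫ u in Ioo a a', |u - v| ^ p ≤ 2 * (a' - a) ^ (p + 1) / (p + 1) := by
  rw [← integral_Ioc_eq_integral_Ioo, ← intervalIntegral.integral_of_le ha,
    intervalIntegral.integral_comp_sub_right (fun x => |x| ^ p)]
  simpa using integral_abs_rpow_le hp hp0 (sub_le_sub_right ha v)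

lemma setIntegral_setIntegral_abs_sub_rpow_le {p a a' b b' : ℝ} (hp : -1 < p) (hp0 : p ≤ 0)
    (ha : a ≤ a') (hb : b ≤ b') :
    ∫ v in Ioo b b', ∫ u in Ioo a a', |u - v| ^ p
      ≤ 2 * (a' - a) ^ (p + 1) / (p + 1) * (b' - b) := by
  have hinner_nonneg : ∀ v, 0 ≤ ∫ u in Ioo a a', |u - v| ^ p := fun v =>
    integral_nonneg fun u => by positivity
  refine (le_abs_self _).trans ?_
  have := norm_setIntegral_le_of_norm_le_const (μ := volume) (s := Ioo b b') measure_Ioo_lt_top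
    (fun v _ => (Real.norm_of_nonneg (hinner_nonneg v)).trans_le
      (setIntegral_abs_sub_rpow_le hp hp0 ha v))
  rwa [Real.volume_real_Ioo_of_le hb] at this

lemma setIntegral_setIntegral_fbmKernel_le {H a b τ : ℝ} (hH : 1/2 < H) (hH1 : H ≤ 1)
    (hτ : 0 < τ) :
    ∫ v in Ioo b (b + τ), ∫ u in Ioo a (a + τ), H * (2*H - 1) * |u - v| ^ (2*H - 2)
      ≤ 2 * H * τ ^ (2*H) := by
  have h2H : 0 < 2*H - 1 := by linarith
  simp_rw [integral_const_mul]
  calc H * (2*H - 1) * ∫ v in Ioo b (b + τ), ∫ u in Ioo a (a + τ), |u - v| ^ (2*H - 2)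
      ≤ H * (2*H - 1) * (2 * τ ^ (2*H - 2 + 1) / (2*H - 2 + 1) * τ) := by
        gcongr
        simpa using setIntegral_setIntegral_abs_sub_rpow_le (a := a) (a' := a + τ) (b := b)
          (b' := b + τ) (by linarith) (by linarith) (by linarith) (by linarith)
    _ = 2 * H * τ ^ (2*H) := by
        rw [show 2*H - 2 + 1 = 2*H - 1 by ring, show τ ^ (2*H) = τ ^ (2*H - 1) * τ by
          rw [← rpow_add_one hτ.ne', sub_add_cancel]]
        linear_combination H * τ * div_mul_cancel₀ (2 * τ ^ (2*H - 1)) h2H.ne'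

lemma sum_range_pow_sub_le {w : ℝ} (hw0 : 0 ≤ w) (hw1 : w < 1) (m : ℕ) :
    ∑ i ∈ Finset.range m, w ^ (m - i) ≤ w / (1 - w) := by
  calc ∑ i ∈ Finset.range m, w ^ (m - i) = ∑ k ∈ Finset.Ico 1 (m + 1), w ^ k := by
        rw [Finset.sum_Ico_eq_sum_range, add_tsub_cancel_right, ← Finset.sum_range_reflect]
        refine Finset.sum_congr rfl fun i hi => ?_
        rw [Finset.mem_range] at hi
        congr 1
        omega
    _ ≤ w ^ 1 / (1 - w) := geom_sum_Ico_le_of_lt_one hw0 hw1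
    _ = w / (1 - w) := by rw [pow_one]

lemma rpow_mul_inv_sq_le {τ l s β : ℝ} (hτ : 0 < τ) (hl : 0 < l) (hτl : 1 ≤ τ * l)
    (hβ : -1 ≤ β) :
    τ ^ s * ((τ * l)⁻¹) ^ 2 ≤ τ ^ (s + β - 1) * l ^ (β - 1) := by
  have hpow : ((τ * l)⁻¹) ^ 2 ≤ (τ * l) ^ (β - 1) := by
    rw [← rpow_natCast, ← rpow_neg_one, ← rpow_mul (by positivity)]
    exact rpow_le_rpow_of_exponent_le hτl (by push_cast; linarith)
  calc τ ^ s * ((τ * l)⁻¹) ^ 2 ≤ τ ^ s * (τ * l) ^ (β - 1) := by gcongr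
    _ = τ ^ (s + β - 1) * l ^ (β - 1) := by
        rw [mul_rpow hτ.le hl.le, ← mul_assoc, ← rpow_add hτ, add_sub_assoc]

/-- For `H ∈ (1/2, 1)`, `β ∈ (1-2H, 1]` and
`φ(y) = H(2H-1)|y|^{2H-2}`, there is `C > 0` depending only on `H` and `β` such that
for every `τ > 0` and `λ > 0` with `τλ > 1`, and every `m ≥ 1` (grid points `t_k = kτ`),
`Σ_{i,j=0}^{m-1} ∫_{t_j}^{t_{j+1}} ∫_{t_i}^{t_{i+1}}
  (1+τλ)^{-(m-i)} (1+τλ)^{-(m-j)} φ(u-v) du dv ≤ C τ^{2H+β-1} λ^{β-1}`. -/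
theorem stmt_15 (H : ℝ) (hH : H ∈ Set.Ioo (1/2 : ℝ) 1)
    (β : ℝ) (hβ : β ∈ Set.Ioc (1 - 2*H) 1) :
    ∃ C : ℝ, 0 < C ∧ ∀ τ : ℝ, 0 < τ → ∀ l : ℝ, 0 < l → 1 < τ * l →
      ∀ m : ℕ, 1 ≤ m →
      (∑ i ∈ Finset.range m, ∑ j ∈ Finset.range m,
        ∫ v in Set.Ioo ((j : ℝ) * τ) (((j : ℝ) + 1) * τ),
          ∫ u in Set.Ioo ((i : ℝ) * τ) (((i : ℝ) + 1) * τ),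
            ((1 + τ * l)⁻¹) ^ (m - i) * ((1 + τ * l)⁻¹) ^ (m - j) *
              (H * (2*H - 1) * |u - v| ^ (2*H - 2)))
        ≤ C * τ ^ (2*H + β - 1) * l ^ (β - 1) := by
  obtain ⟨hH, hH1⟩ := hH
  refine ⟨2, two_pos, fun τ hτ l hl hτl m _ => ?_⟩
  set w := (1 + τ * l)⁻¹
  have hw0 : 0 ≤ w := by positivity
  have hgeom : ∑ i ∈ Finset.range m, w ^ (m - i) ≤ (τ * l)⁻¹ := by
    refine (sum_range_pow_sub_le hw0 (inv_lt_one_of_one_lt₀ (by linarith)) m).trans_eq ?_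
    simp only [w]
    field_simp
    ring
  have hcell : ∀ i j : ℕ,
      ∫ v in Ioo ((j : ℝ) * τ) (((j : ℝ) + 1) * τ), ∫ u in Ioo ((i : ℝ) * τ) (((i : ℝ) + 1) * τ),
        w ^ (m - i) * w ^ (m - j) * (H * (2*H - 1) * |u - v| ^ (2*H - 2))
        ≤ w ^ (m - i) * w ^ (m - j) * (2 * H * τ ^ (2*H)) := fun i j => by
    simp_rw [integral_const_mul, add_one_mul]
    refine mul_le_mul_of_nonneg_left ?_ (by positivity)
    simpa only [integral_const_mul] using setIntegral_setIntegral_fbmKernel_le hH hH1.le hτ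
  calc _ ≤ ∑ i ∈ Finset.range m, ∑ j ∈ Finset.range m,
        w ^ (m - i) * w ^ (m - j) * (2 * H * τ ^ (2*H)) :=
        Finset.sum_le_sum fun i _ => Finset.sum_le_sum fun j _ => hcell i j
    _ = (∑ i ∈ Finset.range m, w ^ (m - i)) ^ 2 * (2 * H * τ ^ (2*H)) := by
        rw [sq, Finset.sum_mul_sum, Finset.sum_mul]
        simp_rw [Finset.sum_mul]
    _ ≤ ((τ * l)⁻¹) ^ 2 * (2 * 1 * τ ^ (2*H)) := by gcongr
    _ ≤ 2 * τ ^ (2*H + β - 1) * l ^ (β - 1) := by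
        linarith [rpow_mul_inv_sq_le (s := 2*H) hτ hl hτl.le (by linarith [hβ.1] : -1 ≤ β)]
end
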